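/- (A^R_3 is generated by six elements as a V_3-module.) For every (d1, d2, d3) ∈ ℤ³, there exist Laurent polynomials c_{e1,e2} ∈ R[z1^{±1}, z2^{±1}, z3^{±1}] for 0 ≤ e1 ≤ 2 and 0 ≤ e2 ≤ 1, each symmetric under all permutations of z1, z2, z3, such that Sh_3(d1, d2, d3) = Σ_{0 ≤ e1 ≤ 2, 0 ≤ e2 ≤ 1} c_{e1,e2} · Sh_3(e1, e2, 0). -/

import Mathlib

open MvPolynomial Finset

noncomputable section

/-- `Fk k` is the field `F_k = ℂ(q1, q2, z1, …, zk)`, realized as the fraction field of the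
polynomial ring `ℂ[q1, q2, z1, …, zk]`. -/
abbrev Fk (k : ℕ) : Type := FractionRing (MvPolynomial (Fin 2 ⊕ Fin k) ℂ)

/-- The indeterminate `q1` in `F_k`. -/
def q1F (k : ℕ) : Fk k := algebraMap (MvPolynomial (Fin 2 ⊕ Fin k) ℂ) (Fk k) (X (Sum.inl 0))

/-- The indeterminate `q2` in `F_k`. -/
def q2F (k : ℕ) : Fk k := algebraMap (MvPolynomial (Fin 2 ⊕ Fin k) ℂ) (Fk k) (X (Sum.inl 1))

/-- The indeterminates `z1, …, zk` in `F_k` (zero-indexed: `zF k i` is `z_{i+1}`). -/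
def zF (k : ℕ) (i : Fin k) : Fk k := algebraMap (MvPolynomial (Fin 2 ⊕ Fin k) ℂ) (Fk k) (X (Sum.inr i))

/-- `ω(x, y) = (x − q·y)(y − q1·x)(y − q2·x)/(x − y)`, where `q = q1·q2`. -/
def omegaF {K : Type*} [Field K] (q1 q2 x y : K) : K :=
  (x - q1 * q2 * y) * (y - q1 * x) * (y - q2 * x) / (x - y)

/-- The monomial shuffle element
`Sh_k(d) = Σ_{σ ∈ S_k} ∏_{i=1}^k z_{σ(i)}^{d_i} · ∏_{1 ≤ i < j ≤ k} ω(z_{σ(i)}, z_{σ(j)})`,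
as a rational expression in the values `z : Fin k → K`. -/
def Sh {K : Type*} [Field K] (q1 q2 : K) {k : ℕ} (z : Fin k → K) (d : Fin k → ℤ) : K :=
  ∑ σ : Equiv.Perm (Fin k), (∏ i, z (σ i) ^ d i) *
    ∏ p ∈ Finset.univ.filter (fun p : Fin k × Fin k => p.1 < p.2),
      omegaF q1 q2 (z (σ p.1)) (z (σ p.2))

/-- The Laurent polynomial subring `R[z1^{±1}, …, zk^{±1}]` of `K`, where
`R = ℂ[q1^{±1}, q2^{±1}]`: the subring generated by the complex constants,
`q1^{±1}`, `q2^{±1}` and the `z_i^{±1}`. -/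
def laurentSubring {K : Type*} [Field K] [Algebra ℂ K] (q1 q2 : K) {k : ℕ} (z : Fin k → K) :
    Subring K :=
  Subring.closure ((Set.range fun c : ℂ => algebraMap ℂ K c) ∪ {q1, q1⁻¹, q2, q2⁻¹} ∪
    Set.range z ∪ Set.range fun i => (z i)⁻¹)

/-- The `ℂ(q1,q2)`-algebra automorphism of `F_k` fixing `q1, q2` and sending `z_i ↦ z_{τ(i)}`. -/
def permAut (k : ℕ) (τ : Equiv.Perm (Fin k)) : Fk k ≃+* Fk k :=
  IsFractionRing.ringEquivOfRingEquiv
    (MvPolynomial.renameEquiv ℂ (Equiv.sumCongr (Equiv.refl (Fin 2)) τ)).toRingEquiv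


/-! `Sh_3(d) = Σ_σ m_d(σ) Ω(σ)` with `m_d(σ) = z_{σ1}^{d1} z_{σ2}^{d2} z_{σ3}^{d3}` and `Ω(σ)`
independent of `d`, so it suffices to expand the function `m_d` on `S_3` over the symmetric Laurent
polynomials `Λ`, acting diagonally; the coefficients are then automatically the same for every `σ`.
The functions `x, y, z : σ ↦ z_{σ1}, z_{σ2}, z_{σ3}` are roots of `T³ - e₁T² + e₂T - e₃` with
`e₁, e₂, e₃, e₃⁻¹ ∈ Λ`. Multiplying by a power of `e₃ = xyz` removes `z`; the cubic recurrence lets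
the exponent of `x` (and then of `y`) run over all of `ℤ` once it is known for `0, 1, 2`; and the
exponent `2` of `y` is reduced by `y² = (e₁ - x)y - (e₂ - e₁x + x²)`, since `y, z` are the roots of
`T² - (e₁ - x)T + e₃x⁻¹`. -/

section Recurrence

variable {R M : Type*} [CommRing R] [AddCommGroup M] [Module R M]

theorem Submodule.mem_of_linearRecurrence (N : Submodule R M) {f : ℤ → M} (a b : R) (c : Rˣ)
    (hrec : ∀ n, f (n + 3) = a • f (n + 2) + b • f (n + 1) + c • f n)
    (h0 : f 0 ∈ N) (h1 : f 1 ∈ N) (h2 : f 2 ∈ N) (n : ℤ) : f n ∈ N := by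
  suffices ∀ n, f n ∈ N ∧ f (n + 1) ∈ N ∧ f (n + 2) ∈ N from (this n).1
  intro n
  induction n using Int.inductionOn' (b := 0) with
  | zero => exact ⟨h0, by simpa using h1, by simpa using h2⟩
  | succ k _ ih =>
    obtain ⟨hk0, hk1, hk2⟩ := ih
    refine ⟨hk1, by rwa [add_assoc, one_add_one_eq_two], ?_⟩
    rw [add_assoc, show (1 + 2 : ℤ) = 3 by norm_num, hrec]
    exact add_mem (add_mem (N.smul_mem _ hk2) (N.smul_mem _ hk1)) (N.smul_mem _ hk0)
  | pred k _ ih =>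
    obtain ⟨hk0, hk1, hk2⟩ := ih
    have hprev : f (k - 1) = c⁻¹ • (f (k + 2) - a • f (k + 1) - b • f k) := by
      rw [show k + 2 = k - 1 + 3 by ring, hrec, show k - 1 + 2 = k + 1 by ring,
        show k - 1 + 1 = k by ring,
        show a • f (k + 1) + b • f k + c • f (k - 1) - a • f (k + 1) - b • f k = c • f (k - 1) by
          abel, inv_smul_smul]
    refine ⟨?_, by simpa using hk0, by rwa [show k - 1 + 2 = k + 1 by ring]⟩
    rw [hprev]
    exact N.smul_mem _ (sub_mem (sub_mem hk2 (N.smul_mem _ hk1)) (N.smul_mem _ hk0))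

end Recurrence

section Cubic

variable {R A : Type*} [CommRing R] [CommRing A] [Algebra R A]

def artinSpan (R : Type*) {A : Type*} [CommRing R] [CommRing A] [Algebra R A] (x y : A) :
    Submodule R A :=
  Submodule.span R (Set.range fun e : Fin 3 × Fin 2 => x ^ (e.1 : ℕ) * y ^ (e.2 : ℕ))

theorem mul_zpow_mem_of_cubic {N : Submodule R A} {x : Aˣ} {s₁ s₂ : R} {s₃ : Rˣ}
    (hx : (x : A) ^ 3 = algebraMap R A s₁ * x ^ 2 - algebraMap R A s₂ * x + algebraMap R A s₃)
    {m : A} (h0 : m ∈ N) (h1 : m * x ∈ N) (h2 : m * x ^ 2 ∈ N) (n : ℤ) :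
    m * ↑(x ^ n) ∈ N := by
  refine N.mem_of_linearRecurrence (f := fun n => m * ↑(x ^ n)) s₁ (-s₂) s₃ (fun n => ?_)
    (by simpa using h0) (by simpa using h1) (by simpa using h2) n
  simp only [zpow_add, zpow_ofNat, Units.val_mul, Units.val_pow_eq_pow_val, Algebra.smul_def,
    map_neg, Units.smul_def]
  linear_combination (m * ↑(x ^ n)) * hx

variable {x y z : Aˣ} {s₁ s₂ : R} {s₃ : Rˣ}

theorem zpow_mul_zpow_mem_span
    (h₁ : algebraMap R A s₁ = x + y + z) (h₂ : algebraMap R A s₂ = x * y + x * z + y * z)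
    (h₃ : algebraMap R A s₃ = x * y * z) (a b : ℤ) :
    (↑(x ^ a) : A) * ↑(y ^ b) ∈
      artinSpan R (x : A) y := by
  set N := artinSpan R (x : A) y
  have hgen (i j : ℕ) (hi : i < 3) (hj : j < 2) : (y : A) ^ j * x ^ i ∈ N := by
    rw [mul_comm]; exact Submodule.subset_span ⟨(⟨i, hi⟩, ⟨j, hj⟩), rfl⟩
  have hx : (x : A) ^ 3 =
      algebraMap R A s₁ * x ^ 2 - algebraMap R A s₂ * x + algebraMap R A s₃ := by
    linear_combination (-(x : A) ^ 2) * h₁ + x * h₂ - h₃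
  have hy : (y : A) ^ 3 =
      algebraMap R A s₁ * y ^ 2 - algebraMap R A s₂ * y + algebraMap R A s₃ := by
    linear_combination (-(y : A) ^ 2) * h₁ + y * h₂ - h₃
  have hyx : (y : A) ^ 2 =
      algebraMap R A s₁ * y - x * y - algebraMap R A s₂ + algebraMap R A s₁ * x - x ^ 2 := by
    linear_combination (-((y : A) + x)) * h₁ + h₂
  have hy01 (j : ℕ) (hj : j < 2) (n : ℤ) : (y : A) ^ j * ↑(x ^ n) ∈ N :=
    mul_zpow_mem_of_cubic hx (by simpa using hgen 0 j (by norm_num) hj)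
      (by simpa using hgen 1 j (by norm_num) hj) (hgen 2 j (by norm_num) hj) n
  have hy2 (n : ℤ) : (y : A) ^ 2 * ↑(x ^ n) ∈ N := by
    have h1 := hy01 1 (by norm_num)
    have h0 := hy01 0 (by norm_num)
    have h : (y : A) ^ 2 * ↑(x ^ n) = s₁ • (y ^ 1 * ↑(x ^ n)) - y ^ 1 * ↑(x ^ (n + 1)) -
        s₂ • (y ^ 0 * ↑(x ^ n)) + s₁ • (y ^ 0 * ↑(x ^ (n + 1))) - y ^ 0 * ↑(x ^ (n + 2)) := by
      simp only [zpow_add, zpow_one, zpow_two, Units.val_mul, Algebra.smul_def]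
      linear_combination (↑(x ^ n) : A) * hyx
    rw [h]
    exact N.sub_mem (N.add_mem (N.sub_mem (N.sub_mem (N.smul_mem _ (h1 n)) (h1 _))
      (N.smul_mem _ (h0 n))) (N.smul_mem _ (h0 _))) (h0 _)
  exact mul_zpow_mem_of_cubic hy (by simpa using hy01 0 (by norm_num) a)
    (by simpa [mul_comm] using hy01 1 (by norm_num) a) (by simpa [mul_comm] using hy2 a) b

theorem zpow_mul_zpow_mul_zpow_mem_span
    (h₁ : algebraMap R A s₁ = x + y + z) (h₂ : algebraMap R A s₂ = x * y + x * z + y * z)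
    (h₃ : algebraMap R A s₃ = x * y * z) (a b c : ℤ) :
    ((x ^ a * y ^ b * z ^ c : Aˣ) : A) ∈
      artinSpan R (x : A) y := by
  set u := Units.map (algebraMap R A : R →* A) s₃
  have hu : u = x * y * z := Units.ext (by simp [u, h₃])
  have hz : x ^ a * y ^ b * z ^ c = u ^ c * (x ^ (a - c) * y ^ (b - c)) := by
    conv_lhs => rw [← add_sub_cancel c a, ← add_sub_cancel c b, zpow_add, zpow_add]
    rw [hu, mul_zpow, mul_zpow]
    simp only [mul_assoc, mul_comm, mul_left_comm]
  rw [hz, Units.val_mul, ← map_zpow, Units.coe_map, Units.val_mul]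
  simpa [Algebra.smul_def] using
    Submodule.smul_mem _ (↑(s₃ ^ c) : R) (zpow_mul_zpow_mem_span h₁ h₂ h₃ (a - c) (b - c))

end Cubic

open Equiv

section SymmetricLaurent

variable (k : ℕ)

def symmetricLaurentSubring : Subring (Fk k) :=
  laurentSubring (q1F k) (q2F k) (zF k) ⊓
    ⨅ τ : Perm (Fin k), RingHom.eqLocus (permAut k τ : Fk k →+* Fk k) (RingHom.id _)

variable {k}

theorem mem_symmetricLaurentSubring {x : Fk k} :
    x ∈ symmetricLaurentSubring k ↔
      x ∈ laurentSubring (q1F k) (q2F k) (zF k) ∧ ∀ τ, permAut k τ x = x := by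
  simp [symmetricLaurentSubring, Subring.mem_iInf]

theorem zF_ne_zero (i : Fin k) : zF k i ≠ 0 := by simp [zF]

theorem permAut_zF (τ : Perm (Fin k)) (i : Fin k) : permAut k τ (zF k i) = zF k (τ i) := by
  simp [permAut, zF]

theorem zF_mem_laurentSubring (i : Fin k) : zF k i ∈ laurentSubring (q1F k) (q2F k) (zF k) :=
  Subring.subset_closure (Or.inl (Or.inr ⟨i, rfl⟩))

theorem inv_zF_mem_laurentSubring (i : Fin k) :
    (zF k i)⁻¹ ∈ laurentSubring (q1F k) (q2F k) (zF k) :=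
  Subring.subset_closure (Or.inr ⟨i, rfl⟩)

theorem sum_mem_symmetricLaurentSubring {f : Fin k → Fk k}
    (hf : ∀ i, f i ∈ laurentSubring (q1F k) (q2F k) (zF k))
    (hτ : ∀ τ i, permAut k τ (f i) = f (τ i)) : ∑ i, f i ∈ symmetricLaurentSubring k :=
  mem_symmetricLaurentSubring.mpr ⟨Subring.sum_mem _ fun i _ => hf i, fun τ => by
    simp only [map_sum, hτ]; exact Equiv.sum_comp τ f⟩

theorem prod_mem_symmetricLaurentSubring {f : Fin k → Fk k}
    (hf : ∀ i, f i ∈ laurentSubring (q1F k) (q2F k) (zF k))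
    (hτ : ∀ τ i, permAut k τ (f i) = f (τ i)) : ∏ i, f i ∈ symmetricLaurentSubring k :=
  mem_symmetricLaurentSubring.mpr ⟨Subring.prod_mem _ fun i _ => hf i, fun τ => by
    simp only [map_prod, hτ]; exact Equiv.prod_comp τ f⟩

theorem sum_zF_mem_symmetricLaurentSubring : ∑ i, zF k i ∈ symmetricLaurentSubring k :=
  sum_mem_symmetricLaurentSubring zF_mem_laurentSubring permAut_zF

theorem prod_zF_mem_symmetricLaurentSubring : ∏ i, zF k i ∈ symmetricLaurentSubring k :=
  prod_mem_symmetricLaurentSubring zF_mem_laurentSubring permAut_zF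

theorem sum_inv_zF_mem_symmetricLaurentSubring :
    ∑ i, (zF k i)⁻¹ ∈ symmetricLaurentSubring k :=
  sum_mem_symmetricLaurentSubring inv_zF_mem_laurentSubring (by simp [permAut_zF])

theorem prod_inv_zF_mem_symmetricLaurentSubring :
    ∏ i, (zF k i)⁻¹ ∈ symmetricLaurentSubring k :=
  prod_mem_symmetricLaurentSubring inv_zF_mem_laurentSubring (by simp [permAut_zF])

end SymmetricLaurent

def omegaProd {K : Type*} [Field K] (q1 q2 : K) {k : ℕ} (z : Fin k → K) (σ : Perm (Fin k)) :
    K :=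
  ∏ p ∈ Finset.univ.filter (fun p : Fin k × Fin k => p.1 < p.2),
    omegaF q1 q2 (z (σ p.1)) (z (σ p.2))

theorem Sh_eq_linearCombination {K : Type*} [Field K] (q1 q2 : K) {k : ℕ} (z : Fin k → K)
    (d : Fin k → ℤ) :
    Sh q1 q2 z d = Fintype.linearCombination K (omegaProd q1 q2 z) fun σ => ∏ i, z (σ i) ^ d i :=
  rfl

section ThreeVariables

local notation "Λ" => symmetricLaurentSubring 3
local notation "A" => Perm (Fin 3) → Fk 3

def zPerm (i : Fin 3) : Aˣ :=
  MulEquiv.piUnits.symm fun σ => Units.mk0 (zF 3 (σ i)) (zF_ne_zero _)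

theorem zPerm_zpow_apply (i : Fin 3) (n : ℤ) (σ : Perm (Fin 3)) :
    ((zPerm i ^ n : Aˣ) : A) σ = zF 3 (σ i) ^ n := by
  simp [zPerm]

theorem zPerm_apply (i : Fin 3) (σ : Perm (Fin 3)) :
    (zPerm i : A) σ = zF 3 (σ i) := by
  simpa using zPerm_zpow_apply i 1 σ

theorem monomial_mem_span (a b c : ℤ) :
    (fun σ : Perm (Fin 3) => zF 3 (σ 0) ^ a * zF 3 (σ 1) ^ b * zF 3 (σ 2) ^ c) ∈
      artinSpan Λ (fun σ : Perm (Fin 3) => zF 3 (σ 0)) (fun σ => zF 3 (σ 1)) := by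
  let e₁ : Λ := ⟨_, sum_zF_mem_symmetricLaurentSubring⟩
  -- `e₂` is written as `e₃ · Σ zᵢ⁻¹`, whose symmetry follows from the sum and product lemmas.
  let e₂ : Λ := ⟨_, mul_mem prod_zF_mem_symmetricLaurentSubring
    sum_inv_zF_mem_symmetricLaurentSubring⟩
  let e₃ : Λˣ := Units.mkOfMulEqOne ⟨_, prod_zF_mem_symmetricLaurentSubring⟩
    ⟨_, prod_inv_zF_mem_symmetricLaurentSubring⟩
    (Subtype.ext <| by simp [Finset.prod_ne_zero_iff, zF_ne_zero])
  have key := zpow_mul_zpow_mul_zpow_mem_span (x := zPerm 0) (y := zPerm 1) (z := zPerm 2)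
    (s₁ := e₁) (s₂ := e₂) (s₃ := e₃) ?h₁ ?h₂ ?h₃ a b c
  case h₁ =>
    funext σ
    change ∑ i, zF 3 i = _
    rw [← Equiv.sum_comp σ, Fin.sum_univ_three]
    simp only [Pi.add_apply, zPerm_apply]
  case h₂ =>
    funext σ
    change (∏ i, zF 3 i) * ∑ i, (zF 3 i)⁻¹ = _
    rw [← Equiv.sum_comp σ, ← Equiv.prod_comp σ, Fin.sum_univ_three, Fin.prod_univ_three]
    simp only [Pi.add_apply, Pi.mul_apply, zPerm_apply]
    field_simp [zF_ne_zero]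
    ring
  case h₃ =>
    funext σ
    change ∏ i, zF 3 i = _
    rw [← Equiv.prod_comp σ, Fin.prod_univ_three]
    simp only [Pi.mul_apply, zPerm_apply]
  have hmon : ((zPerm 0 ^ a * zPerm 1 ^ b * zPerm 2 ^ c : Aˣ) : A) =
      fun σ => zF 3 (σ 0) ^ a * zF 3 (σ 1) ^ b * zF 3 (σ 2) ^ c := by
    funext σ; simp only [Units.val_mul, Pi.mul_apply, zPerm_zpow_apply]
  have hgen : ∀ i, (zPerm i : A) = fun σ => zF 3 (σ i) := fun i => funext (zPerm_apply i)
  rwa [hmon, hgen, hgen] at key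

theorem Sh_mem_span (d₁ d₂ d₃ : ℤ) :
    Sh (q1F 3) (q2F 3) (zF 3) ![d₁, d₂, d₃] ∈
      Submodule.span Λ (Set.range fun e : Fin 3 × Fin 2 =>
        Sh (q1F 3) (q2F 3) (zF 3) ![((e.1 : ℕ) : ℤ), ((e.2 : ℕ) : ℤ), 0]) := by
  have h := Submodule.mem_map_of_mem
    (f := (Fintype.linearCombination (Fk 3) (omegaProd (q1F 3) (q2F 3) (zF 3))).restrictScalars Λ)
    (monomial_mem_span d₁ d₂ d₃)
  rw [artinSpan, Submodule.map_span, ← Set.range_comp] at h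
  convert h using 4 <;>
    simp [Sh_eq_linearCombination, Fintype.linearCombination_apply, Fin.prod_univ_three]

end ThreeVariables

/-- `A^R_3` is generated by the six elements `Sh_3(e1, e2, 0)`, `0 ≤ e1 ≤ 2`, `0 ≤ e2 ≤ 1`, as a
`V_3`-module: for every `(d1, d2, d3) ∈ ℤ³` there are Laurent polynomials `c_{e1,e2}`, each
symmetric under all permutations of `z1, z2, z3`, with
`Sh_3(d1, d2, d3) = Σ_{e1, e2} c_{e1,e2} · Sh_3(e1, e2, 0)`. -/
theorem AR3_generated_by_six (d1 d2 d3 : ℤ) :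
    ∃ c : Fin 3 → Fin 2 → Fk 3,
      (∀ (e1 : Fin 3) (e2 : Fin 2),
        c e1 e2 ∈ laurentSubring (q1F 3) (q2F 3) (zF 3) ∧
        ∀ τ : Equiv.Perm (Fin 3), permAut 3 τ (c e1 e2) = c e1 e2) ∧
      Sh (q1F 3) (q2F 3) (zF 3) ![d1, d2, d3] =
        ∑ e1 : Fin 3, ∑ e2 : Fin 2,
          c e1 e2 * Sh (q1F 3) (q2F 3) (zF 3) ![((e1 : ℕ) : ℤ), ((e2 : ℕ) : ℤ), 0] := by
  obtain ⟨c, hc⟩ := (Submodule.mem_span_range_iff_exists_fun _).mp (Sh_mem_span d1 d2 d3)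
  refine ⟨fun e1 e2 => c (e1, e2),
    fun e1 e2 => mem_symmetricLaurentSubring.mp (c (e1, e2)).2, ?_⟩
  rw [← hc, Fintype.sum_prod_type]
  rfl

end
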